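/- arXiv:1311.1220 — 4 statements merged into one kernel-verified Lean document; each statement's English description precedes it below -/
import Mathlib

section
/- For the map μ₁ : ℂ² × ℂ² → ℂ² defined by μ₁(z₁,z₂,w₁,w₂) = (i·conj(z₁)·w₁ + z₂·conj(w₂), −conj(z₂)·w₁ − i·z₁·conj(w₂)), if z = (z₁,z₂) has ‖z‖ = 1 then the map w ↦ μ₁(z,w) : ℂ² → ℂ² is a bijection. -/
noncomputable section

/-- The unitary Hurwitz–Radon type multiplication `μ₁ : ℂ² × ℂ² → ℂ²`. -/
def mu1 (z w : ℂ × ℂ) : ℂ × ℂ :=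
  (Complex.I * (starRingEnd ℂ) z.1 * w.1 + z.2 * (starRingEnd ℂ) w.2,
   -((starRingEnd ℂ) z.2) * w.1 - Complex.I * z.1 * (starRingEnd ℂ) w.2)

/-- If `z` has Euclidean norm `1`, then `w ↦ μ₁(z,w)` is a bijection of `ℂ²`. -/
theorem mu1_bijective (z : ℂ × ℂ) (hz : Real.sqrt (‖z.1‖ ^ 2 + ‖z.2‖ ^ 2) = 1) :
    Function.Bijective (fun w : ℂ × ℂ => mu1 z w) := by
  have h1 : ‖z.1‖ ^ 2 + ‖z.2‖ ^ 2 = 1 := by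
    have h0 : (0:ℝ) ≤ ‖z.1‖ ^ 2 + ‖z.2‖ ^ 2 := by positivity
    nlinarith [Real.sq_sqrt h0, hz]
  have key : (starRingEnd ℂ) z.1 * z.1 + (starRingEnd ℂ) z.2 * z.2 = 1 := by
    have e1 : (starRingEnd ℂ) z.1 * z.1 = (‖z.1‖ ^ 2 : ℝ) := by
      rw [mul_comm, Complex.mul_conj, Complex.normSq_eq_norm_sq]
    have e2 : (starRingEnd ℂ) z.2 * z.2 = (‖z.2‖ ^ 2 : ℝ) := by
      rw [mul_comm, Complex.mul_conj, Complex.normSq_eq_norm_sq]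
    rw [e1, e2, ← Complex.ofReal_add, h1, Complex.ofReal_one]
  set g : ℂ × ℂ → ℂ × ℂ := fun u =>
    (-Complex.I * z.1 * u.1 - z.2 * u.2,
     z.2 * (starRingEnd ℂ) u.1 - Complex.I * z.1 * (starRingEnd ℂ) u.2) with hg
  have hI : Complex.I * Complex.I = -1 := Complex.I_mul_I
  refine Function.bijective_iff_has_inverse.mpr ⟨g, fun w => ?_, fun u => ?_⟩
  · simp only [mu1, hg, map_add, map_mul, map_sub, map_neg,
      Complex.conj_conj, Complex.conj_I]
    rw [Prod.ext_iff]
    constructor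
    · show -Complex.I * z.1 * (Complex.I * (starRingEnd ℂ) z.1 * w.1 + z.2 * (starRingEnd ℂ) w.2)
          - z.2 * (-((starRingEnd ℂ) z.2) * w.1 - Complex.I * z.1 * (starRingEnd ℂ) w.2) = w.1
      have : -Complex.I * z.1 * (Complex.I * (starRingEnd ℂ) z.1 * w.1 + z.2 * (starRingEnd ℂ) w.2)
          - z.2 * (-((starRingEnd ℂ) z.2) * w.1 - Complex.I * z.1 * (starRingEnd ℂ) w.2)
          = ((starRingEnd ℂ) z.1 * z.1 + (starRingEnd ℂ) z.2 * z.2) * w.1 := by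
        ring_nf; rw [Complex.I_sq]; ring
      rw [this, key, one_mul]
    · show z.2 * (-Complex.I * z.1 * ((starRingEnd ℂ) w.1) + (starRingEnd ℂ) z.2 * w.2)
          - Complex.I * z.1 * (-z.2 * (starRingEnd ℂ) w.1 - -Complex.I * (starRingEnd ℂ) z.1 * w.2) = w.2
      have : z.2 * (-Complex.I * z.1 * ((starRingEnd ℂ) w.1) + (starRingEnd ℂ) z.2 * w.2)
          - Complex.I * z.1 * (-z.2 * (starRingEnd ℂ) w.1 - -Complex.I * (starRingEnd ℂ) z.1 * w.2)
          = ((starRingEnd ℂ) z.1 * z.1 + (starRingEnd ℂ) z.2 * z.2) * w.2 := by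
        ring_nf; rw [Complex.I_sq]; ring
      rw [this, key, one_mul]
  · simp only [mu1, hg, map_add, map_mul, map_sub, map_neg,
      Complex.conj_conj, Complex.conj_I]
    rw [Prod.ext_iff]
    constructor
    · show Complex.I * (starRingEnd ℂ) z.1 * (-Complex.I * z.1 * u.1 - z.2 * u.2)
          + z.2 * ((starRingEnd ℂ) z.2 * u.1 - -Complex.I * (starRingEnd ℂ) z.1 * u.2) = u.1
      have : Complex.I * (starRingEnd ℂ) z.1 * (-Complex.I * z.1 * u.1 - z.2 * u.2)
          + z.2 * ((starRingEnd ℂ) z.2 * u.1 - -Complex.I * (starRingEnd ℂ) z.1 * u.2)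
          = ((starRingEnd ℂ) z.1 * z.1 + (starRingEnd ℂ) z.2 * z.2) * u.1 := by
        ring_nf; rw [Complex.I_sq]; ring
      rw [this, key, one_mul]
    · show -((starRingEnd ℂ) z.2) * (-Complex.I * z.1 * u.1 - z.2 * u.2)
          - Complex.I * z.1 * ((starRingEnd ℂ) z.2 * u.1 - -Complex.I * (starRingEnd ℂ) z.1 * u.2) = u.2
      have : -((starRingEnd ℂ) z.2) * (-Complex.I * z.1 * u.1 - z.2 * u.2)
          - Complex.I * z.1 * ((starRingEnd ℂ) z.2 * u.1 - -Complex.I * (starRingEnd ℂ) z.1 * u.2)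
          = ((starRingEnd ℂ) z.1 * z.1 + (starRingEnd ℂ) z.2 * z.2) * u.2 := by
        ring_nf; rw [Complex.I_sq]; ring
      rw [this, key, one_mul]
end
end

section
/- Suppose f : S^{2a+1} × S^{2b+1} → S^{2b+1} is a ℤ_t-invariant map, i.e. f(λx, λy) = f(x,y) for all λ ∈ ℤ_t ⊆ S¹ and f(x, ·) is a homeomorphism for each x. Then the map L_{(a,b)}(t) → L_{(a)}(t) × S^{2b+1} sending [x,y] ↦ ([x], f(x,y)) is a well-defined homeomorphism. -/
noncomputable section

open Metric

/-- The subgroup `ℤ_t` of the circle (`t = ⊤` meaning all of `S¹`). -/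
def rootsOfUnitySet (t : ℕ∞) : Set ℂ :=
  {l : ℂ | ‖l‖ = 1 ∧ ∀ m : ℕ, t = (m : ℕ∞) → l ^ m = 1}

/-- The relation defining `L_{(a,b)}(t)` on `S^{2a+1} × S^{2b+1}`. -/
def lensRel2 (t : ℕ∞) (a b : ℕ)
    (p q : sphere (0 : EuclideanSpace ℂ (Fin (a + 1))) 1 ×
           sphere (0 : EuclideanSpace ℂ (Fin (b + 1))) 1) : Prop :=
  ∃ l ∈ rootsOfUnitySet t,
    (q.1 : EuclideanSpace ℂ (Fin (a + 1))) = l • (p.1 : EuclideanSpace ℂ (Fin (a + 1))) ∧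
    (q.2 : EuclideanSpace ℂ (Fin (b + 1))) = l • (p.2 : EuclideanSpace ℂ (Fin (b + 1)))

/-- The relation defining `L_{(a)}(t)` on `S^{2a+1}`. -/
def lensRel1 (t : ℕ∞) (a : ℕ)
    (x y : sphere (0 : EuclideanSpace ℂ (Fin (a + 1))) 1) : Prop :=
  ∃ l ∈ rootsOfUnitySet t,
    (y : EuclideanSpace ℂ (Fin (a + 1))) = l • (x : EuclideanSpace ℂ (Fin (a + 1)))

namespace LensAux

lemma one_mem (t : ℕ∞) : (1 : ℂ) ∈ rootsOfUnitySet t :=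
  ⟨by simp, fun m _ => one_pow m⟩

lemma ne_zero {t : ℕ∞} {l : ℂ} (hl : l ∈ rootsOfUnitySet t) : l ≠ 0 := by
  intro h; rw [h] at hl; simpa using hl.1

lemma inv_mem {t : ℕ∞} {l : ℂ} (hl : l ∈ rootsOfUnitySet t) : l⁻¹ ∈ rootsOfUnitySet t := by
  refine ⟨by rw [norm_inv, hl.1, inv_one], fun m hm => ?_⟩
  rw [inv_pow, hl.2 m hm, inv_one]

lemma mul_mem {t : ℕ∞} {l l' : ℂ} (hl : l ∈ rootsOfUnitySet t) (hl' : l' ∈ rootsOfUnitySet t) :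
    l * l' ∈ rootsOfUnitySet t := by
  refine ⟨by rw [norm_mul, hl.1, hl'.1, one_mul], fun m hm => ?_⟩
  rw [mul_pow, hl.2 m hm, hl'.2 m hm, one_mul]

lemma isCompact_roots (t : ℕ∞) : IsCompact (rootsOfUnitySet t) := by
  have hclosed : IsClosed (rootsOfUnitySet t) := by
    have : rootsOfUnitySet t =
        {l : ℂ | ‖l‖ = 1} ∩ ⋂ m ∈ {m : ℕ | t = (m : ℕ∞)}, {l : ℂ | l ^ m = 1} := by
      ext l
      simp [rootsOfUnitySet, Set.mem_iInter]
    rw [this]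
    refine (isClosed_eq continuous_norm continuous_const).inter ?_
    exact isClosed_biInter fun m _ => isClosed_eq (continuous_pow m) continuous_const
  have hbdd : Bornology.IsBounded (rootsOfUnitySet t) := by
    refine (Metric.isBounded_iff_subset_closedBall 0).2 ⟨1, fun l hl => ?_⟩
    simp [mem_closedBall, Complex.dist_eq, hl.1]
  exact Metric.isCompact_of_isClosed_isBounded hclosed hbdd

variable {t : ℕ∞} {a b : ℕ}

lemma equiv1 : Equivalence (lensRel1 t a) where
  refl x := ⟨1, one_mem t, by simp⟩
  symm := by
    rintro x y ⟨l, hl, h⟩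
    exact ⟨l⁻¹, inv_mem hl, by rw [h, smul_smul, inv_mul_cancel₀ (ne_zero hl), one_smul]⟩
  trans := by
    rintro x y z ⟨l, hl, h⟩ ⟨l', hl', h'⟩
    exact ⟨l' * l, mul_mem hl' hl, by rw [h', h, smul_smul]⟩

lemma equiv2 : Equivalence (lensRel2 t a b) where
  refl p := ⟨1, one_mem t, by simp⟩
  symm := by
    rintro p q ⟨l, hl, h1, h2⟩
    refine ⟨l⁻¹, inv_mem hl, ?_, ?_⟩
    · rw [h1, smul_smul, inv_mul_cancel₀ (ne_zero hl), one_smul]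
    · rw [h2, smul_smul, inv_mul_cancel₀ (ne_zero hl), one_smul]
  trans := by
    rintro p q r ⟨l, hl, h1, h2⟩ ⟨l', hl', h1', h2'⟩
    exact ⟨l' * l, mul_mem hl' hl, by rw [h1', h1, smul_smul], by rw [h2', h2, smul_smul]⟩

/-- scalar multiplication on the sphere by a norm-one complex number -/
def smulSph {n : ℕ} (l : ℂ) (hl : ‖l‖ = 1)
    (x : sphere (0 : EuclideanSpace ℂ (Fin (n + 1))) 1) :
    sphere (0 : EuclideanSpace ℂ (Fin (n + 1))) 1 :=
  ⟨l • (x : EuclideanSpace ℂ (Fin (n + 1))), by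
    rw [mem_sphere_zero_iff_norm, norm_smul, hl, one_mul,
      ← mem_sphere_zero_iff_norm]
    exact x.2⟩

lemma continuous_smulSph {n : ℕ} (l : ℂ) (hl : ‖l‖ = 1) :
    Continuous (smulSph (n := n) l hl) :=
  Continuous.subtype_mk (continuous_subtype_val.const_smul l) _

lemma isOpenMap_mk1 : IsOpenMap (Quot.mk (lensRel1 t a)) := by
  intro U hU
  rw [← (isQuotientMap_quot_mk (r := lensRel1 t a)).isOpen_preimage]
  have : Quot.mk (lensRel1 t a) ⁻¹' (Quot.mk (lensRel1 t a) '' U) =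
      ⋃ l : rootsOfUnitySet t, smulSph l.1 l.2.1 ⁻¹' U := by
    ext y
    simp only [Set.mem_preimage, Set.mem_image, Set.mem_iUnion]
    constructor
    · rintro ⟨x, hxU, hxy⟩
      obtain ⟨l, hl, h⟩ := equiv1.eqvGen_iff.1 (Quot.eq.1 hxy.symm)
      refine ⟨⟨l, hl⟩, ?_⟩
      have : smulSph l hl.1 y = x := Subtype.ext h.symm
      rwa [this]
    · rintro ⟨⟨l, hl⟩, hmem⟩
      exact ⟨smulSph l hl.1 y, hmem, (Quot.sound ⟨l, hl, rfl⟩).symm⟩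
  rw [this]
  exact isOpen_iUnion fun l => (continuous_smulSph l.1 l.2.1).isOpen_preimage U hU

lemma isClosed_rel1 :
    IsClosed {p : (sphere (0 : EuclideanSpace ℂ (Fin (a + 1))) 1) ×
        (sphere (0 : EuclideanSpace ℂ (Fin (a + 1))) 1) | lensRel1 t a p.1 p.2} := by
  have key : {p : (sphere (0 : EuclideanSpace ℂ (Fin (a + 1))) 1) ×
        (sphere (0 : EuclideanSpace ℂ (Fin (a + 1))) 1) | lensRel1 t a p.1 p.2} =
      (fun q : rootsOfUnitySet t × sphere (0 : EuclideanSpace ℂ (Fin (a + 1))) 1 =>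
        (q.2, smulSph q.1.1 q.1.2.1 q.2)) '' Set.univ := by
    ext p
    simp only [Set.image_univ, Set.mem_range, Set.mem_setOf_eq]
    constructor
    · rintro ⟨l, hl, h⟩
      exact ⟨(⟨l, hl⟩, p.1), by ext <;> simp [smulSph, ← h]⟩
    · rintro ⟨⟨⟨l, hl⟩, x⟩, h⟩
      refine ⟨l, hl, ?_⟩
      have h1 : p.1 = x := (congrArg Prod.fst h).symm
      have h2 : p.2 = smulSph l hl.1 x := (congrArg Prod.snd h).symm
      rw [h1, h2]; rfl
  rw [key]
  haveI : CompactSpace (rootsOfUnitySet t) := isCompact_iff_compactSpace.1 (isCompact_roots t)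
  refine (IsCompact.image ?_ ?_).isClosed
  · exact isCompact_univ
  · refine Continuous.prodMk continuous_snd ?_
    refine Continuous.subtype_mk ?_ _
    exact Continuous.smul (Continuous.subtype_val continuous_fst)
      (continuous_subtype_val.comp continuous_snd)

lemma t2_quot1 : T2Space (Quot (lensRel1 t a)) := by
  rw [t2_iff_isClosed_diagonal]
  set q := Quot.mk (lensRel1 t a) with hq
  have hsurj : Function.Surjective (Prod.map q q) := by
    rintro ⟨u, v⟩
    obtain ⟨x, hx⟩ := Quot.exists_rep u
    obtain ⟨y, hy⟩ := Quot.exists_rep v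
    exact ⟨(x, y), by simp [Prod.map, hq, hx, hy]⟩
  have hqq : Topology.IsQuotientMap (Prod.map q q) :=
    (isOpenMap_mk1.prodMap isOpenMap_mk1).isQuotientMap
      ((continuous_quot_mk.comp continuous_fst).prodMk
        (continuous_quot_mk.comp continuous_snd)) hsurj
  rw [← hqq.isClosed_preimage]
  have : Prod.map q q ⁻¹' Set.diagonal (Quot (lensRel1 t a)) =
      {p : (sphere (0 : EuclideanSpace ℂ (Fin (a + 1))) 1) ×
        (sphere (0 : EuclideanSpace ℂ (Fin (a + 1))) 1) | lensRel1 t a p.1 p.2} := by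
    ext p
    constructor
    · intro hp
      have h : q p.1 = q p.2 := hp
      exact equiv1.eqvGen_iff.1 (Quot.eq.1 h)
    · intro hp
      show q p.1 = q p.2
      exact Quot.sound hp
  rw [this]
  exact isClosed_rel1

end LensAux

/-- Given a `ℤ_t`-invariant map `f : S^{2a+1} × S^{2b+1} → S^{2b+1}`, the map
`[x,y] ↦ ([x], f(x,y))` is a well-defined homeomorphism `L_{(a,b)}(t) → L_{(a)}(t) × S^{2b+1}`. -/
theorem lensRel_homeo_of_invariant (t : ℕ∞) (ht : 0 < t) (a b : ℕ)
    (f : sphere (0 : EuclideanSpace ℂ (Fin (a + 1))) 1 ×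
         sphere (0 : EuclideanSpace ℂ (Fin (b + 1))) 1 →
         sphere (0 : EuclideanSpace ℂ (Fin (b + 1))) 1)
    (hf : Continuous f)
    (hinv : ∀ p q, lensRel2 t a b p q → f p = f q)
    (hhomeo : ∀ x, ∃ h : sphere (0 : EuclideanSpace ℂ (Fin (b + 1))) 1 ≃ₜ
        sphere (0 : EuclideanSpace ℂ (Fin (b + 1))) 1, ∀ y, h y = f (x, y)) :
    ∃ F : Quot (lensRel2 t a b) ≃ₜ
        (Quot (lensRel1 t a) × sphere (0 : EuclideanSpace ℂ (Fin (b + 1))) 1),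
      ∀ p, F (Quot.mk _ p) = (Quot.mk _ p.1, f p) := by
  classical
  haveI : T2Space (Quot (lensRel1 t a)) := LensAux.t2_quot1
  have hsound : ∀ p q, lensRel2 t a b p q →
      ((Quot.mk (lensRel1 t a) p.1, f p) :
        Quot (lensRel1 t a) × sphere (0 : EuclideanSpace ℂ (Fin (b + 1))) 1) =
      (Quot.mk (lensRel1 t a) q.1, f q) := by
    intro p q hpq
    obtain ⟨l, hl, h1, h2⟩ := hpq
    exact Prod.ext (Quot.sound ⟨l, hl, h1⟩) (hinv p q ⟨l, hl, h1, h2⟩)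
  let F₀ : Quot (lensRel2 t a b) →
      Quot (lensRel1 t a) × sphere (0 : EuclideanSpace ℂ (Fin (b + 1))) 1 :=
    Quot.lift (fun p => (Quot.mk (lensRel1 t a) p.1, f p)) hsound
  have hF : ∀ p, F₀ (Quot.mk _ p) = (Quot.mk (lensRel1 t a) p.1, f p) := fun _ => rfl
  have hbij : Function.Bijective F₀ := by
    constructor
    · intro u v
      induction u using Quot.ind with | _ p =>
      induction v using Quot.ind with | _ q =>
      intro h
      rw [hF p, hF q] at h
      have h1 : Quot.mk (lensRel1 t a) p.1 = Quot.mk (lensRel1 t a) q.1 :=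
        congrArg Prod.fst h
      have h2 : f p = f q := congrArg Prod.snd h
      obtain ⟨l, hl, hx⟩ := LensAux.equiv1.eqvGen_iff.1 (Quot.eq.1 h1)
      obtain ⟨e, he⟩ := hhomeo q.1
      have hrel : lensRel2 t a b p (q.1, LensAux.smulSph l hl.1 p.2) := ⟨l, hl, hx, rfl⟩
      have hfe : f (q.1, LensAux.smulSph l hl.1 p.2) = f (q.1, q.2) := by
        rw [← hinv _ _ hrel, h2]
      have hy : LensAux.smulSph l hl.1 p.2 = q.2 := by
        have := ((he _).trans hfe).trans (he q.2).symm
        exact e.injective this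
      refine Quot.sound ⟨l, hl, hx, ?_⟩
      rw [← hy]; rfl
    · rintro ⟨c, z⟩
      obtain ⟨x, hx⟩ := Quot.exists_rep c
      obtain ⟨e, he⟩ := hhomeo x
      refine ⟨Quot.mk _ (x, e.symm z), ?_⟩
      rw [hF]
      rw [← he (e.symm z), e.apply_symm_apply, hx]
  have hcont : Continuous F₀ :=
    continuous_quot_lift hsound ((continuous_quot_mk.comp continuous_fst).prodMk hf)
  have hcont' : Continuous (Equiv.ofBijective F₀ hbij :
      Quot (lensRel2 t a b) → Quot (lensRel1 t a) ×
        sphere (0 : EuclideanSpace ℂ (Fin (b + 1))) 1) := hcont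
  exact ⟨hcont'.homeoOfEquivCompactToT2, fun p => hF p⟩
end
end

section
/- Define β_j to be the ℤ₂-Betti numbers of a space whose ℤ₂-cohomology is the tensor product of H*(L^{2n₁+1}(t); ℤ₂) (which has one generator in each degree 0,1,…,2n₁+1 for even t, and generators only in degrees 0 and 2n₁+1 for odd t or t=∞ replaced by H*(ℂP^{n₁};ℤ₂) with generators in even degrees 0,2,…,2n₁) with an exterior algebra Λ[x₂,…,x_r], deg x_i = 2n_i + 1. Then the mod-2 sum ∑_{i≥0} β_{2i} (the Kervaire semi-characteristic) equals: n₁+1 mod 2 if (r=1 and t even) or (r≤2 and t=∞); 1 if r=1 and t odd; and 0 otherwise. -/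
noncomputable section

open Finset
open scoped Classical

/-- Mod 2 Betti numbers of the bottom factor: for `t = ∞` this is `ℂP^{n₁}` (generators in
even degrees `0,…,2n₁`); for finite even `t` it is `L^{2n₁+1}(t)` with one generator in
each degree `0,…,2n₁+1`; for finite odd `t` there are generators only in degrees `0` and
`2n₁+1`. -/
def baseBetti2 (t : ℕ∞) (n1 : ℕ) (d : ℕ) : ℕ :=
  if t = ⊤ then (if d % 2 = 0 ∧ d ≤ 2 * n1 then 1 else 0)
  else if (∃ k : ℕ, t = (k : ℕ∞) ∧ Even k) then (if d ≤ 2 * n1 + 1 then 1 else 0)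
  else (if d = 0 ∨ d = 2 * n1 + 1 then 1 else 0)

/-- Betti numbers of the exterior algebra `Λ[x₂,…,x_r]` with `deg x_i = 2n_i+1`. -/
def extBetti {r : ℕ} (n : Fin (r + 1) → ℕ) (d : ℕ) : ℕ :=
  ((univ : Finset (Finset (Fin r))).filter
    (fun σ => ∑ i ∈ σ, (2 * n i.succ + 1) = d)).card

/-- Mod 2 Betti numbers of `ℂP_{n̄}(t)` from the tensor product description. -/
def prodBetti2 (t : ℕ∞) {r : ℕ} (n : Fin (r + 1) → ℕ) (d : ℕ) : ℕ :=
  ∑ e ∈ range (d + 1), baseBetti2 t (n 0) e * extBetti n (d - e)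

def Epar (r p : ℕ) : ℕ :=
  ((univ : Finset (Finset (Fin r))).filter (fun σ => σ.card % 2 = p)).card

lemma Epar_add (r : ℕ) : Epar r 0 + Epar r 1 = 2 ^ r := by
  have h := Finset.card_filter_add_card_filter_not
    (s := (univ : Finset (Finset (Fin r)))) (p := fun σ => σ.card % 2 = 0)
  have h2 : ((univ : Finset (Finset (Fin r))).filter (fun σ => ¬ σ.card % 2 = 0)).card
      = Epar r 1 := by
    unfold Epar; congr 1; apply Finset.filter_congr; intro σ _; constructor <;> (intro; omega)
  simp only [card_univ, Fintype.card_finset, Fintype.card_fin] at h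
  rw [h2] at h
  unfold Epar
  unfold Epar at h
  omega

lemma Epar_eq {r : ℕ} (hr : r ≠ 0) : Epar r 0 = Epar r 1 := by
  have i0 : Fin r := ⟨0, Nat.pos_of_ne_zero hr⟩
  set g : Finset (Fin r) → Finset (Fin r) :=
    fun σ => if i0 ∈ σ then σ.erase i0 else insert i0 σ with hg
  have hcard : ∀ σ : Finset (Fin r), (g σ).card % 2 = (σ.card + 1) % 2 := by
    intro σ
    by_cases h : i0 ∈ σ
    · have hp : 0 < σ.card := Finset.card_pos.mpr ⟨i0, h⟩
      simp only [hg, if_pos h, Finset.card_erase_of_mem h]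
      omega
    · simp [hg, if_neg h, Finset.card_insert_of_notMem h]
  have hgg : ∀ σ, g (g σ) = σ := by
    intro σ
    by_cases h : i0 ∈ σ
    · simp [hg, if_pos h, Finset.notMem_erase, Finset.insert_erase h]
    · simp [hg, if_neg h, Finset.erase_insert h]
  unfold Epar
  refine Finset.card_bij' (fun σ _ => g σ) (fun σ _ => g σ) ?_ ?_ ?_ ?_
  · intro σ hσ
    simp only [mem_filter, mem_univ, true_and] at hσ ⊢
    rw [hcard]; omega
  · intro σ hσ
    simp only [mem_filter, mem_univ, true_and] at hσ ⊢
    rw [hcard]; omega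
  · intro σ _; exact hgg σ
  · intro σ _; exact hgg σ


lemma Epar_zero0 : Epar 0 0 = 1 := by
  have h : ∀ σ ∈ (univ : Finset (Finset (Fin 0))), σ.card % 2 = 0 := by
    intro σ _; simp [Finset.eq_empty_of_isEmpty σ]
  rw [Epar, Finset.filter_true_of_mem h, card_univ]
  simp

lemma Epar_zero1 : Epar 0 1 = 0 := by
  have := Epar_add 0
  have := Epar_zero0
  omega


def key {r : ℕ} (n : Fin (r + 1) → ℕ) (σ : Finset (Fin r)) : ℕ :=
  ∑ i ∈ σ, (2 * n i.succ + 1)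

lemma key_le {r : ℕ} (n : Fin (r + 1) → ℕ) (σ : Finset (Fin r)) :
    key n σ ≤ 2 * (∑ i : Fin r, n i.succ) + r := by
  have h1 : key n σ ≤ ∑ i : Fin r, (2 * n i.succ + 1) :=
    Finset.sum_le_sum_of_subset (Finset.subset_univ σ)
  have h2 : ∑ i : Fin r, (2 * n i.succ + 1) = 2 * (∑ i : Fin r, n i.succ) + r := by
    rw [Finset.sum_add_distrib, ← Finset.mul_sum]
    simp
  omega

lemma key_mod {r : ℕ} (n : Fin (r + 1) → ℕ) (σ : Finset (Fin r)) :
    key n σ % 2 = σ.card % 2 := by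
  have h : key n σ = 2 * (∑ i ∈ σ, n i.succ) + σ.card := by
    rw [key, Finset.sum_add_distrib, ← Finset.mul_sum]
    simp
  omega

lemma sum_ext {r : ℕ} (n : Fin (r + 1) → ℕ) (s : Finset ℕ) :
    ∑ f ∈ s, extBetti n f
      = ((univ : Finset (Finset (Fin r))).filter (fun σ => key n σ ∈ s)).card := by
  rw [Finset.card_eq_sum_card_fiberwise (f := key n) (t := s)
    (s := (univ : Finset (Finset (Fin r))).filter (fun σ => key n σ ∈ s))
    (fun σ hσ => (Finset.mem_filter.mp hσ).2)]
  refine Finset.sum_congr rfl fun f hf => ?_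
  rw [extBetti, Finset.filter_filter]
  congr 1
  apply Finset.filter_congr
  intro σ _
  show key n σ = f ↔ key n σ ∈ s ∧ key n σ = f
  exact ⟨fun h => ⟨h ▸ hf, h⟩, fun h => h.2⟩

lemma base_zero (t : ℕ∞) (n1 e : ℕ) (h : 2 * n1 + 1 < e) : baseBetti2 t n1 e = 0 := by
  unfold baseBetti2
  split_ifs <;> omega

lemma count_even (M m : ℕ) (h : 2 * m < M) :
    ((range M).filter (fun e => e % 2 = 0 ∧ e ≤ 2 * m)).card = m + 1 := by
  have he : (range M).filter (fun e => e % 2 = 0 ∧ e ≤ 2 * m)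
      = (range (m + 1)).image (fun k => 2 * k) := by
    ext e
    simp only [Finset.mem_filter, Finset.mem_range, Finset.mem_image]
    constructor
    · rintro ⟨he1, h0, h1⟩; exact ⟨e / 2, by omega, by omega⟩
    · rintro ⟨k, hk, rfl⟩; omega
  rw [he, Finset.card_image_of_injective _ (fun a b hab => by omega), Finset.card_range]

lemma count_odd (M m : ℕ) (h : 2 * m + 1 < M) :
    ((range M).filter (fun e => e % 2 = 1 ∧ e ≤ 2 * m + 1)).card = m + 1 := by
  have he : (range M).filter (fun e => e % 2 = 1 ∧ e ≤ 2 * m + 1)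
      = (range (m + 1)).image (fun k => 2 * k + 1) := by
    ext e
    simp only [Finset.mem_filter, Finset.mem_range, Finset.mem_image]
    constructor
    · rintro ⟨he1, h0, h1⟩; exact ⟨e / 2, by omega, by omega⟩
    · rintro ⟨k, hk, rfl⟩; omega
  rw [he, Finset.card_image_of_injective _ (fun a b hab => by omega), Finset.card_range]

lemma main_sum (t : ℕ∞) {r : ℕ} (n : Fin (r + 1) → ℕ) :
    ∑ i ∈ range (2 * (∑ j, n j) + (r + 1) + 2), prodBetti2 t n (2 * i)
      = (∑ e ∈ range (2 * (2 * (∑ j, n j) + (r + 1) + 2)),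
          if e % 2 = 0 then baseBetti2 t (n 0) e else 0) * Epar r 0
        + (∑ e ∈ range (2 * (2 * (∑ j, n j) + (r + 1) + 2)),
          if e % 2 = 1 then baseBetti2 t (n 0) e else 0) * Epar r 1 := by
  set N := 2 * (∑ j, n j) + (r + 1) + 2 with hN
  set M := 2 * N with hM
  have hsum : (∑ j, n j) = n 0 + ∑ i : Fin r, n i.succ := Fin.sum_univ_succ n
  have step1 : ∀ i ∈ range N, prodBetti2 t n (2 * i)
      = ∑ e ∈ range M, if e ≤ 2 * i then baseBetti2 t (n 0) e * extBetti n (2 * i - e) else 0 := by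
    intro i hi
    rw [Finset.mem_range] at hi
    have hfil : (range M).filter (fun e => e ≤ 2 * i) = range (2 * i + 1) := by
      ext e; simp only [Finset.mem_filter, Finset.mem_range]; omega
    rw [prodBetti2, ← hfil, Finset.sum_filter]
  rw [Finset.sum_congr rfl step1, Finset.sum_comm]
  have step2 : ∀ e ∈ range M,
      (∑ i ∈ range N, if e ≤ 2 * i then baseBetti2 t (n 0) e * extBetti n (2 * i - e) else 0)
        = baseBetti2 t (n 0) e * Epar r (e % 2) := by
    intro e he
    rw [Finset.mem_range] at he
    by_cases hbig : 2 * (n 0) + 1 < e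
    · rw [base_zero t (n 0) e hbig]; simp
    · push_neg at hbig
      have hpull : (∑ i ∈ range N,
            if e ≤ 2 * i then baseBetti2 t (n 0) e * extBetti n (2 * i - e) else 0)
          = baseBetti2 t (n 0) e
            * ∑ i ∈ range N, (if e ≤ 2 * i then extBetti n (2 * i - e) else 0) := by
        rw [Finset.mul_sum]
        refine Finset.sum_congr rfl fun i _ => ?_
        rw [mul_ite, mul_zero]
      rw [hpull]
      congr 1
      rw [← Finset.sum_filter]
      have hbij : ∑ i ∈ (range N).filter (fun i => e ≤ 2 * i), extBetti n (2 * i - e)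
          = ∑ f ∈ (range (2 * N - e)).filter (fun f => f % 2 = e % 2), extBetti n f := by
        refine Finset.sum_bij' (fun i _ => 2 * i - e) (fun f _ => (f + e) / 2) ?_ ?_ ?_ ?_ ?_
        · intro i hi; simp only [Finset.mem_filter, Finset.mem_range] at hi ⊢; omega
        · intro f hf; simp only [Finset.mem_filter, Finset.mem_range] at hf ⊢; omega
        · intro i hi; simp only [Finset.mem_filter, Finset.mem_range] at hi; omega
        · intro f hf; simp only [Finset.mem_filter, Finset.mem_range] at hf; omega
        · intro i hi; rfl
      rw [hbij, sum_ext, Epar]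
      congr 1
      apply Finset.filter_congr
      intro σ _
      have h1 := key_le n σ
      have h2 := key_mod n σ
      simp only [Finset.mem_filter, Finset.mem_range]
      constructor
      · rintro ⟨-, hp⟩; omega
      · intro hp; exact ⟨by omega, by omega⟩
  rw [Finset.sum_congr rfl step2]
  have step3 : ∀ e ∈ range M, baseBetti2 t (n 0) e * Epar r (e % 2)
      = (if e % 2 = 0 then baseBetti2 t (n 0) e else 0) * Epar r 0
        + (if e % 2 = 1 then baseBetti2 t (n 0) e else 0) * Epar r 1 := by
    intro e _
    rcases Nat.mod_two_eq_zero_or_one e with h | h <;> simp [h]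
  rw [Finset.sum_congr rfl step3, Finset.sum_add_distrib, ← Finset.sum_mul, ← Finset.sum_mul]

lemma two_pow_zmod {s : ℕ} (hs : s ≠ 0) : ((2 ^ s : ℕ) : ZMod 2) = 0 := by
  push_cast
  rw [show ((2 : ZMod 2) = 0) by decide, zero_pow hs]


/-- The Kervaire semi-characteristic `∑ β_{2i} mod 2` of `ℂP_{(n₁,…,n_r)}(t)` (odd
dimensional case): it equals `n₁+1 mod 2` if (`r = 1` and `t` even) or (`r ≤ 2` and
`t = ∞`); `1` if `r = 1` and `t` odd; and `0` otherwise. (The tuple has `r+1` entries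
`n 0, …, n r`, so "`r = 1`" reads `r = 0`.) -/
theorem lensProduct_semicharacteristic (t : ℕ∞) (ht : 0 < t) (r : ℕ)
    (n : Fin (r + 1) → ℕ)
    (hodd : Odd ((r + 1) - (if t = ⊤ then 1 else 0))) :
    ((∑ i ∈ range (2 * (∑ j, n j) + (r + 1) + 2), prodBetti2 t n (2 * i) : ℕ) : ZMod 2) =
      if (r = 0 ∧ ∃ k : ℕ, t = (k : ℕ∞) ∧ Even k) ∨ (r ≤ 1 ∧ t = ⊤) then
        ((n 0 : ZMod 2) + 1)
      else if r = 0 ∧ ∃ k : ℕ, t = (k : ℕ∞) ∧ Odd k then 1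
      else 0 := by
  clear ht hodd
  have hmain := main_sum t n
  set N := 2 * (∑ j, n j) + (r + 1) + 2 with hN
  set M := 2 * N with hM
  have hsum : (∑ j, n j) = n 0 + ∑ i : Fin r, n i.succ := Fin.sum_univ_succ n
  have hMn : 2 * (n 0) + 1 < M := by omega
  have hEadd := Epar_add r
  by_cases htop : t = ⊤
  · subst htop
    have hA1 : (∑ e ∈ range M, if e % 2 = 1 then baseBetti2 ⊤ (n 0) e else 0) = 0 := by
      apply Finset.sum_eq_zero
      intro e _
      rw [baseBetti2, if_pos rfl]
      split_ifs <;> omega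
    have hA0 : (∑ e ∈ range M, if e % 2 = 0 then baseBetti2 ⊤ (n 0) e else 0) = n 0 + 1 := by
      rw [← count_even M (n 0) (by omega), Finset.card_filter]
      refine Finset.sum_congr rfl fun e _ => ?_
      rw [baseBetti2, if_pos rfl]
      split_ifs <;> omega
    rw [hA0, hA1, zero_mul, add_zero] at hmain
    by_cases hr : r ≤ 1
    · rw [if_pos (Or.inr ⟨hr, rfl⟩), hmain]
      have hE : Epar r 0 = 1 := by
        by_cases h0 : r = 0
        · rw [h0]; exact Epar_zero0
        · have hEe := Epar_eq (r := r) h0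
          have h2 : (2 : ℕ) ^ r = 2 := by rw [show r = 1 by omega]; norm_num
          omega
      rw [hE, mul_one]
      push_cast
      ring
    · rw [if_neg (by rintro (⟨h0, -⟩ | ⟨h1, -⟩) <;> omega),
        if_neg (by rintro ⟨h0, -⟩; omega), hmain]
      have hEe := Epar_eq (r := r) (by omega)
      have hE : Epar r 0 = 2 ^ (r - 1) := by
        have hp : 2 ^ r = 2 * 2 ^ (r - 1) := by
          conv_lhs => rw [show r = (r - 1) + 1 by omega]
          rw [pow_succ']
        omega
      rw [hE]
      push_cast [two_pow_zmod (show r - 1 ≠ 0 by omega)]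
      ring
  · obtain ⟨k, rfl⟩ : ∃ k : ℕ, t = (k : ℕ∞) := by
      obtain ⟨k, hk⟩ := WithTop.ne_top_iff_exists.mp htop
      exact ⟨k, by exact_mod_cast hk.symm⟩
    by_cases hev : Even k
    · have hb : ∀ e, baseBetti2 (k : ℕ∞) (n 0) e = if e ≤ 2 * (n 0) + 1 then 1 else 0 := by
        intro e
        rw [baseBetti2, if_neg htop, if_pos ⟨k, rfl, hev⟩]
      have hA0 : (∑ e ∈ range M, if e % 2 = 0 then baseBetti2 (k : ℕ∞) (n 0) e else 0)
          = n 0 + 1 := by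
        rw [← count_even M (n 0) (by omega), Finset.card_filter]
        refine Finset.sum_congr rfl fun e _ => ?_
        rw [hb]
        split_ifs <;> omega
      have hA1 : (∑ e ∈ range M, if e % 2 = 1 then baseBetti2 (k : ℕ∞) (n 0) e else 0)
          = n 0 + 1 := by
        rw [← count_odd M (n 0) (by omega), Finset.card_filter]
        refine Finset.sum_congr rfl fun e _ => ?_
        rw [hb]
        split_ifs <;> omega
      rw [hA0, hA1, ← mul_add, hEadd] at hmain
      by_cases hr : r = 0
      · rw [if_pos (Or.inl ⟨hr, k, rfl, hev⟩), hmain,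
          show (2 : ℕ) ^ r = 1 from by rw [hr]; norm_num, mul_one]
        push_cast
        ring
      · rw [if_neg (by
          rintro (⟨h0, -⟩ | ⟨-, h1⟩)
          · exact hr h0
          · exact htop h1),
          if_neg (by rintro ⟨h0, -⟩; exact hr h0), hmain]
        push_cast [two_pow_zmod hr]
        ring
    · have hb : ∀ e, baseBetti2 (k : ℕ∞) (n 0) e
          = if e = 0 ∨ e = 2 * (n 0) + 1 then 1 else 0 := by
        intro e
        rw [baseBetti2, if_neg htop, if_neg (by
          rintro ⟨k', hk', he'⟩
          rw [Nat.cast_inj] at hk'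
          exact hev (hk' ▸ he'))]
      have hA0 : (∑ e ∈ range M, if e % 2 = 0 then baseBetti2 (k : ℕ∞) (n 0) e else 0) = 1 := by
        have h : ∀ e ∈ range M, (if e % 2 = 0 then baseBetti2 (k : ℕ∞) (n 0) e else 0)
            = if e = 0 then 1 else 0 := by
          intro e _
          rw [hb]
          split_ifs <;> omega
        rw [Finset.sum_congr rfl h, Finset.sum_ite_eq' (range M) 0 (fun _ => 1),
          if_pos (Finset.mem_range.mpr (by omega))]
      have hA1 : (∑ e ∈ range M, if e % 2 = 1 then baseBetti2 (k : ℕ∞) (n 0) e else 0) = 1 := by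
        have h : ∀ e ∈ range M, (if e % 2 = 1 then baseBetti2 (k : ℕ∞) (n 0) e else 0)
            = if e = 2 * (n 0) + 1 then 1 else 0 := by
          intro e _
          rw [hb]
          split_ifs <;> omega
        rw [Finset.sum_congr rfl h,
          Finset.sum_ite_eq' (range M) (2 * (n 0) + 1) (fun _ => 1),
          if_pos (Finset.mem_range.mpr (by omega))]
      rw [hA0, hA1, one_mul, one_mul, hEadd] at hmain
      by_cases hr : r = 0
      · rw [if_neg (by
            rintro (⟨-, k', hk', he'⟩ | ⟨-, h1⟩)
            · rw [Nat.cast_inj] at hk'; exact hev (hk' ▸ he')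
            · exact htop h1),
          if_pos ⟨hr, k, rfl, Nat.not_even_iff_odd.mp hev⟩, hmain,
          show (2 : ℕ) ^ r = 1 from by rw [hr]; norm_num]
        norm_num
      · rw [if_neg (by
            rintro (⟨h0, -⟩ | ⟨-, h1⟩)
            · exact hr h0
            · exact htop h1),
          if_neg (by rintro ⟨h0, -⟩; exact hr h0), hmain]
        exact two_pow_zmod hr
end
end

section
/- Let E be the total space S^{2n₁+1} × ⋯ × S^{2n_r+1} × ℂ^k modulo the relation (x̄, z) ∼ (λx̄, λz) for λ ∈ ℤ_t ⊆ S¹, which is the k-fold Whitney sum k·γ_{n̄}(t) of the canonical complex line bundle over ℂP_{n̄}(t). Then the unit sphere bundle S((k+1)·γ_{n̄}(t)) is homeomorphic to ℂP_{(n₁,…,n_r,k)}(t). -/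
noncomputable section

open Metric

variable (t : ℕ∞) {r : ℕ} (n : Fin r → ℕ) (k : ℕ)

/-- The relation defining the total space of `(k+1)·γ_{n̄}(t)`: on
`S^{2n₁+1} × ⋯ × S^{2n_r+1} × ℂ^{k+1}`, identify `(x̄,z) ∼ (λx̄,λz)` for `λ ∈ ℤ_t`. -/
def bundleRel
    (p q : (∀ i : Fin r, sphere (0 : EuclideanSpace ℂ (Fin (n i + 1))) 1) ×
      EuclideanSpace ℂ (Fin (k + 1))) : Prop :=
  ∃ l ∈ rootsOfUnitySet t,
    (∀ i, (q.1 i : EuclideanSpace ℂ (Fin (n i + 1))) =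
      l • (p.1 i : EuclideanSpace ℂ (Fin (n i + 1)))) ∧ q.2 = l • p.2

/-- The relation defining `ℂP_{(n₁,…,n_r,k)}(t)` on
`S^{2n₁+1} × ⋯ × S^{2n_r+1} × S^{2k+1}`. -/
def extLensRel
    (p q : (∀ i : Fin r, sphere (0 : EuclideanSpace ℂ (Fin (n i + 1))) 1) ×
      sphere (0 : EuclideanSpace ℂ (Fin (k + 1))) 1) : Prop :=
  ∃ l ∈ rootsOfUnitySet t,
    (∀ i, (q.1 i : EuclideanSpace ℂ (Fin (n i + 1))) =
      l • (p.1 i : EuclideanSpace ℂ (Fin (n i + 1)))) ∧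
    (q.2 : EuclideanSpace ℂ (Fin (k + 1))) = l • (p.2 : EuclideanSpace ℂ (Fin (k + 1)))

namespace SphereBundleAux

lemma one_mem_roots : (1 : ℂ) ∈ rootsOfUnitySet t :=
  ⟨by simp, fun m _ => one_pow m⟩

lemma inv_mem_roots {l : ℂ} (hl : l ∈ rootsOfUnitySet t) : l⁻¹ ∈ rootsOfUnitySet t :=
  ⟨by rw [norm_inv, hl.1, inv_one], fun m hm => by rw [inv_pow, hl.2 m hm, inv_one]⟩

lemma mul_mem_roots {l l' : ℂ} (hl : l ∈ rootsOfUnitySet t) (hl' : l' ∈ rootsOfUnitySet t) :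
    l * l' ∈ rootsOfUnitySet t :=
  ⟨by rw [norm_mul, hl.1, hl'.1, one_mul],
    fun m hm => by rw [mul_pow, hl.2 m hm, hl'.2 m hm, one_mul]⟩

lemma ne_zero_of_mem_roots {l : ℂ} (hl : l ∈ rootsOfUnitySet t) : l ≠ 0 := by
  intro h
  subst h
  simpa using hl.1

lemma bundleRel_equiv : Equivalence (bundleRel t n k) := by
  constructor
  · intro p
    exact ⟨1, one_mem_roots t, fun i => (one_smul _ _).symm, (one_smul _ _).symm⟩
  · rintro p q ⟨l, hl, h1, h2⟩
    refine ⟨l⁻¹, inv_mem_roots t hl, fun i => ?_, ?_⟩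
    · rw [h1 i, inv_smul_smul₀ (ne_zero_of_mem_roots t hl)]
    · rw [h2, inv_smul_smul₀ (ne_zero_of_mem_roots t hl)]
  · rintro p q s ⟨l, hl, h1, h2⟩ ⟨l', hl', h1', h2'⟩
    refine ⟨l' * l, mul_mem_roots t hl' hl, fun i => ?_, ?_⟩
    · rw [h1' i, h1 i, smul_smul]
    · rw [h2', h2, smul_smul]

lemma bundleRel_of_mk_eq {p q : (∀ i : Fin r, sphere (0 : EuclideanSpace ℂ (Fin (n i + 1))) 1) ×
      EuclideanSpace ℂ (Fin (k + 1))}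
    (h : Quot.mk (bundleRel t n k) p = Quot.mk (bundleRel t n k) q) : bundleRel t n k p q :=
  ((bundleRel_equiv t n k).eqvGen_iff).mp (Quot.eq.mp h)

/-- Normalization of the second coordinate. -/
def normSnd (p : {p : (∀ i : Fin r, sphere (0 : EuclideanSpace ℂ (Fin (n i + 1))) 1) ×
      EuclideanSpace ℂ (Fin (k + 1)) // p.2 ≠ 0}) :
    sphere (0 : EuclideanSpace ℂ (Fin (k + 1))) 1 :=
  ⟨(‖p.val.2‖)⁻¹ • p.val.2, by
    rw [mem_sphere_zero_iff_norm, norm_smul, norm_inv, norm_norm,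
      inv_mul_cancel₀ (norm_ne_zero_iff.mpr p.2)]⟩

/-- The map to the extended lens space, defined on pairs with nonzero second coordinate. -/
def Phi (p : {p : (∀ i : Fin r, sphere (0 : EuclideanSpace ℂ (Fin (n i + 1))) 1) ×
      EuclideanSpace ℂ (Fin (k + 1)) // p.2 ≠ 0}) : Quot (extLensRel t n k) :=
  Quot.mk _ (p.val.1, normSnd n k p)

lemma Phi_congr {p q : {p : (∀ i : Fin r, sphere (0 : EuclideanSpace ℂ (Fin (n i + 1))) 1) ×
      EuclideanSpace ℂ (Fin (k + 1)) // p.2 ≠ 0}}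
    (h : bundleRel t n k p.val q.val) : Phi t n k p = Phi t n k q := by
  obtain ⟨l, hl, h1, h2⟩ := h
  refine Quot.sound ⟨l, hl, h1, ?_⟩
  show (‖q.val.2‖)⁻¹ • q.val.2 = l • ((‖p.val.2‖)⁻¹ • p.val.2)
  rw [h2, norm_smul, hl.1, one_mul, smul_comm]

lemma Phi_continuous : Continuous (Phi t n k) := by
  refine continuous_quot_mk.comp (Continuous.prodMk ?_ ?_)
  · exact continuous_fst.comp continuous_subtype_val
  · refine Continuous.subtype_mk ?_ _
    exact Continuous.smul
      (Continuous.inv₀ (continuous_norm.comp (continuous_snd.comp continuous_subtype_val))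
        (fun p => norm_ne_zero_iff.mpr p.2))
      (continuous_snd.comp continuous_subtype_val)

lemma norm_one_ne_zero {E : Type*} [NormedAddCommGroup E] {x : E} (hx : ‖x‖ = 1) : x ≠ 0 := by
  rw [← norm_ne_zero_iff, hx]
  norm_num

lemma Phi_of_norm_one {p : (∀ i : Fin r, sphere (0 : EuclideanSpace ℂ (Fin (n i + 1))) 1) ×
      EuclideanSpace ℂ (Fin (k + 1))} (hp : ‖p.2‖ = 1) :
    Phi t n k ⟨p, norm_one_ne_zero hp⟩ =
      Quot.mk _ (p.1, ⟨p.2, mem_sphere_zero_iff_norm.mpr hp⟩) := by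
  unfold Phi normSnd
  congr 2
  apply Subtype.ext
  show (‖p.2‖)⁻¹ • p.2 = p.2
  rw [hp, inv_one, one_smul]

/-- The map from the extended lens space to the sphere bundle. -/
def gmap : Quot (extLensRel t n k) →
    {q : Quot (bundleRel t n k) // ∃ p, ‖p.2‖ = 1 ∧ Quot.mk (bundleRel t n k) p = q} :=
  Quot.lift
    (fun s => ⟨Quot.mk _ (s.1, (s.2 : EuclideanSpace ℂ (Fin (k + 1)))),
      ⟨(s.1, (s.2 : EuclideanSpace ℂ (Fin (k + 1)))), mem_sphere_zero_iff_norm.mp s.2.2, rfl⟩⟩)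
    (by
      rintro a b ⟨l, hl, h1, h2⟩
      exact Subtype.ext (Quot.sound ⟨l, hl, h1, h2⟩))

/-- The map from the sphere bundle to the extended lens space, via a choice of representative. -/
def hmap
    (q : {q : Quot (bundleRel t n k) // ∃ p, ‖p.2‖ = 1 ∧ Quot.mk (bundleRel t n k) p = q}) :
    Quot (extLensRel t n k) :=
  Quot.mk _ (q.2.choose.1, ⟨q.2.choose.2, mem_sphere_zero_iff_norm.mpr q.2.choose_spec.1⟩)

lemma hmap_eq_Phi
    (q : {q : Quot (bundleRel t n k) // ∃ p, ‖p.2‖ = 1 ∧ Quot.mk (bundleRel t n k) p = q})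
    (p : (∀ i : Fin r, sphere (0 : EuclideanSpace ℂ (Fin (n i + 1))) 1) ×
      EuclideanSpace ℂ (Fin (k + 1))) (hp : p.2 ≠ 0)
    (hpq : Quot.mk (bundleRel t n k) p = q.1) : hmap t n k q = Phi t n k ⟨p, hp⟩ := by
  have hc1 : ‖q.2.choose.2‖ = 1 := q.2.choose_spec.1
  have hc2 : Quot.mk (bundleRel t n k) q.2.choose = q.1 := q.2.choose_spec.2
  have hrel : bundleRel t n k p q.2.choose := bundleRel_of_mk_eq t n k (by rw [hpq, hc2])
  have h1 : Phi t n k ⟨p, hp⟩ = Phi t n k ⟨q.2.choose, norm_one_ne_zero hc1⟩ :=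
    Phi_congr t n k (p := ⟨p, hp⟩) (q := ⟨q.2.choose, norm_one_ne_zero hc1⟩) hrel
  rw [h1, Phi_of_norm_one t n k hc1]
  rfl

set_option maxHeartbeats 1000000 in
lemma hmap_gmap (l : Quot (extLensRel t n k)) : hmap t n k (gmap t n k l) = l := by
  induction l using Quot.ind with
  | _ s => ?_
  have hs : ‖(s.2 : EuclideanSpace ℂ (Fin (k + 1)))‖ = 1 := mem_sphere_zero_iff_norm.mp s.2.2
  have h1 := hmap_eq_Phi t n k (gmap t n k (Quot.mk _ s))
    (s.1, (s.2 : EuclideanSpace ℂ (Fin (k + 1)))) (norm_one_ne_zero hs) rfl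
  rw [h1, Phi_of_norm_one t n k (p := (s.1, (s.2 : EuclideanSpace ℂ (Fin (k + 1))))) hs]

lemma gmap_hmap
    (q : {q : Quot (bundleRel t n k) // ∃ p, ‖p.2‖ = 1 ∧ Quot.mk (bundleRel t n k) p = q}) :
    gmap t n k (hmap t n k q) = q := by
  have hc2 : Quot.mk (bundleRel t n k) q.2.choose = q.1 := q.2.choose_spec.2
  apply Subtype.ext
  exact hc2

lemma gmap_continuous : Continuous (gmap t n k) := by
  refine continuous_quot_lift _ ?_
  refine Continuous.subtype_mk ?_ _
  exact continuous_quot_mk.comp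
    (Continuous.prodMk continuous_fst (continuous_subtype_val.comp continuous_snd))

lemma hmap_continuous : Continuous (hmap t n k) := by
  rw [continuous_def]
  intro W hW
  set A : Set (Quot (bundleRel t n k)) :=
    Quot.mk (bundleRel t n k) '' (Subtype.val '' (Phi t n k ⁻¹' W)) with hA
  have hpre : Quot.mk (bundleRel t n k) ⁻¹' A = Subtype.val '' (Phi t n k ⁻¹' W) := by
    ext p
    constructor
    · rintro ⟨p', ⟨⟨v, hv, rfl⟩, hmk⟩⟩
      obtain ⟨l, hl, h1, h2⟩ := bundleRel_of_mk_eq t n k hmk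
      have hp2 : p.2 ≠ 0 := by
        rw [h2]
        exact smul_ne_zero (ne_zero_of_mem_roots t hl) v.2
      refine ⟨⟨p, hp2⟩, ?_, rfl⟩
      have heq := Phi_congr t n k (p := v) (q := ⟨p, hp2⟩) ⟨l, hl, h1, h2⟩
      rw [Set.mem_preimage, ← heq]
      exact hv
    · rintro ⟨v, hv, rfl⟩
      exact ⟨v.val, ⟨v, hv, rfl⟩, rfl⟩
  have hAopen : IsOpen A := by
    rw [← isQuotientMap_quot_mk.isOpen_preimage, hpre]
    refine (IsOpen.isOpenMap_subtype_val ?_) _ ((Phi_continuous t n k).isOpen_preimage W hW)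
    exact (isClosed_singleton.preimage continuous_snd).isOpen_compl
  have hkey : hmap t n k ⁻¹' W = Subtype.val ⁻¹' A := by
    ext q
    constructor
    · intro hq
      have hc1 : ‖q.2.choose.2‖ = 1 := q.2.choose_spec.1
      have hc2 : Quot.mk (bundleRel t n k) q.2.choose = q.1 := q.2.choose_spec.2
      have heq := hmap_eq_Phi t n k q q.2.choose (norm_one_ne_zero hc1) hc2
      refine ⟨q.2.choose, ⟨⟨q.2.choose, norm_one_ne_zero hc1⟩, ?_, rfl⟩, hc2⟩
      rw [Set.mem_preimage, ← heq]
      exact hq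
    · rintro ⟨p, ⟨⟨v, hv, rfl⟩, hmk⟩⟩
      have heq := hmap_eq_Phi t n k q v.val v.2 hmk
      rw [Set.mem_preimage, heq]
      exact hv
  rw [hkey]
  exact hAopen.preimage continuous_subtype_val

end SphereBundleAux

/-- The unit sphere bundle of `(k+1)·γ_{n̄}(t)`, i.e. the subspace of the total space
consisting of classes of pairs `(x̄,z)` with `‖z‖ = 1`, is homeomorphic to
`ℂP_{(n₁,…,n_r,k)}(t)`. -/
theorem sphereBundle_homeo (ht : 0 < t) (hr : 0 < r) :
    Nonempty
      ({q : Quot (bundleRel t n k) // ∃ p, ‖p.2‖ = 1 ∧ Quot.mk (bundleRel t n k) p = q} ≃ₜ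
        Quot (extLensRel t n k)) := by
  exact ⟨⟨⟨SphereBundleAux.hmap t n k, SphereBundleAux.gmap t n k,
    SphereBundleAux.gmap_hmap t n k, SphereBundleAux.hmap_gmap t n k⟩,
    SphereBundleAux.hmap_continuous t n k, SphereBundleAux.gmap_continuous t n k⟩⟩
end
end
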